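/- arXiv:2201.08259 — 4 statements merged into one kernel-verified Lean document; each statement's English description precedes it below -/
import Mathlib

section
/- Let M(h) and R(h) be families of bounded operators on a Hilbert space, and N(h) a family of positive integers with N(h) = O(|log h|). Suppose ‖M(h)‖ ≤ A(1 + o(1)) for some constant A > 0, that ‖M(h)^{N(h)}‖ ≤ h^γ A^{N(h)} for some γ > 0, and that ‖R(h)‖ = O(h^η) for some η > 0. Then for every γ' with 0 < γ' < min(γ, η), for all sufficiently small h, ‖(M(h) + R(h))^{N(h)}‖ ≤ h^{γ'} A^{N(h)}. -/
open Filter Topology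

private lemma clm_norm_pow_le {H : Type*} [NormedAddCommGroup H] [NormedSpace ℂ H]
    (T : H →L[ℂ] H) : ∀ n : ℕ, ‖T ^ n‖ ≤ ‖T‖ ^ n := by
  intro n
  induction n with
  | zero => rw [pow_zero, pow_zero]; exact ContinuousLinearMap.norm_id_le
  | succ n ih =>
    rw [pow_succ, pow_succ]
    exact le_trans (norm_mul_le _ _) (mul_le_mul_of_nonneg_right ih (norm_nonneg _))

private lemma key_op {H : Type*} [NormedAddCommGroup H] [NormedSpace ℂ H]
    (M R : H →L[ℂ] H) : ∀ n : ℕ, ‖(M + R) ^ n - M ^ n‖ ≤ (‖M‖ + ‖R‖) ^ n - ‖M‖ ^ n := by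
  intro n
  induction n with
  | zero => simp
  | succ n ih =>
    have key : (M + R) ^ (n + 1) - M ^ (n + 1)
        = ((M + R) ^ n - M ^ n) * (M + R) + M ^ n * R := by
      rw [pow_succ, pow_succ]; noncomm_ring
    rw [key]
    have h1 : ‖((M + R) ^ n - M ^ n) * (M + R)‖
        ≤ ((‖M‖ + ‖R‖) ^ n - ‖M‖ ^ n) * (‖M‖ + ‖R‖) :=
      le_trans (norm_mul_le _ _)
        (mul_le_mul ih (norm_add_le _ _) (norm_nonneg _) (le_trans (norm_nonneg _) ih))
    have h2 : ‖M ^ n * R‖ ≤ ‖M‖ ^ n * ‖R‖ :=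
      le_trans (norm_mul_le _ _)
        (mul_le_mul_of_nonneg_right (clm_norm_pow_le M n) (norm_nonneg _))
    refine le_trans (le_trans (norm_add_le _ _) (add_le_add h1 h2)) (le_of_eq ?_)
    rw [pow_succ, pow_succ]; ring

private lemma real_pow_sub (x y : ℝ) (hy : 0 ≤ y) (hxy : y ≤ x) :
    ∀ n : ℕ, x ^ (n + 1) - y ^ (n + 1) ≤ ((n : ℝ) + 1) * (x - y) * x ^ n := by
  intro n
  induction n with
  | zero => norm_num
  | succ n ih =>
    have hx : 0 ≤ x := le_trans hy hxy
    have hyx : y ^ (n + 1) ≤ x ^ (n + 1) := pow_le_pow_left₀ hy hxy _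
    have h1 : x * (x ^ (n + 1) - y ^ (n + 1)) ≤ x * (((n : ℝ) + 1) * (x - y) * x ^ n) :=
      mul_le_mul_of_nonneg_left ih hx
    have h2 : y ^ (n + 1) * (x - y) ≤ x ^ (n + 1) * (x - y) :=
      mul_le_mul_of_nonneg_right hyx (by linarith)
    push_cast
    calc x ^ (n + 1 + 1) - y ^ (n + 1 + 1)
        = x * (x ^ (n + 1) - y ^ (n + 1)) + y ^ (n + 1) * (x - y) := by ring
      _ ≤ x * (((n : ℝ) + 1) * (x - y) * x ^ n) + x ^ (n + 1) * (x - y) := add_le_add h1 h2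
      _ = ((n : ℝ) + 1 + 1) * (x - y) * x ^ (n + 1) := by ring

/-- Perturbation of the decay bound: if `‖M h‖ ≤ A(1+o(1))`,
`‖(M h)^(N h)‖ ≤ h^γ A^(N h)`, `N h = O(|log h|)` and `‖R h‖ = O(h^η)`, then for every
`0 < γ' < min γ η`, for all sufficiently small `h`, `‖(M h + R h)^(N h)‖ ≤ h^γ' A^(N h)`. -/
theorem stmt1 {H : Type*} [NormedAddCommGroup H] [InnerProductSpace ℂ H] [CompleteSpace H]
    (M R : ℝ → H →L[ℂ] H) (N : ℝ → ℕ) (A γ η : ℝ)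
    (hA : 0 < A) (hγ : 0 < γ) (hη : 0 < η)
    (hNlog : ∃ CN : ℝ, ∀ᶠ h : ℝ in 𝓝[>] (0:ℝ), (N h : ℝ) ≤ CN * |Real.log h|)
    (hM : ∃ f : ℝ → ℝ, Tendsto f (𝓝[>] (0:ℝ)) (𝓝 0) ∧
      ∀ᶠ h : ℝ in 𝓝[>] (0:ℝ), ‖M h‖ ≤ A * (1 + f h))
    (hMN : ∀ᶠ h : ℝ in 𝓝[>] (0:ℝ), ‖(M h) ^ (N h)‖ ≤ h ^ γ * A ^ (N h))
    (hR : ∃ CR : ℝ, ∀ᶠ h : ℝ in 𝓝[>] (0:ℝ), ‖R h‖ ≤ CR * h ^ η) :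
    ∀ γ' : ℝ, 0 < γ' → γ' < min γ η →
      ∀ᶠ h : ℝ in 𝓝[>] (0:ℝ), ‖(M h + R h) ^ (N h)‖ ≤ h ^ γ' * A ^ (N h) := by
  obtain ⟨CN, hCN⟩ := hNlog
  obtain ⟨f, hf0, hf⟩ := hM
  obtain ⟨CR, hCR⟩ := hR
  intro γ' hγ'0 hγ'lt
  have hγ'γ : γ' < γ := lt_of_lt_of_le hγ'lt (min_le_left _ _)
  have hγ'η : γ' < η := lt_of_lt_of_le hγ'lt (min_le_right _ _)
  set ε := (η - γ') / 2 with hεdef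
  have hε : 0 < ε := by rw [hεdef]; linarith
  set CN' := max CN 1 with hCN'def
  have hCN' : (0:ℝ) < CN' := lt_of_lt_of_le one_pos (le_max_right _ _)
  set CR' := max CR 0 with hCR'def
  have hCR'0 : (0:ℝ) ≤ CR' := le_max_right _ _
  set g : ℝ → ℝ := fun h => |f h| + CR' * h ^ η / A with hgdef
  -- basic rpow tendsto
  have hrpow : ∀ r : ℝ, 0 < r → Tendsto (fun h : ℝ => h ^ r) (𝓝[>] (0:ℝ)) (𝓝 0) := by
    intro r hr
    have := (Real.continuousAt_rpow_const 0 r (Or.inr hr.le)).tendsto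
    rw [Real.zero_rpow (ne_of_gt hr)] at this
    exact this.mono_left nhdsWithin_le_nhds
  have hgt : Tendsto g (𝓝[>] (0:ℝ)) (𝓝 0) := by
    have h1 : Tendsto (fun h => |f h|) (𝓝[>] (0:ℝ)) (𝓝 0) := by
      simpa using hf0.abs
    have h2 : Tendsto (fun h : ℝ => CR' * h ^ η / A) (𝓝[>] (0:ℝ)) (𝓝 0) := by
      have := ((hrpow η hη).const_mul CR').div_const A
      simpa using this
    simpa using h1.add h2
  have hglt : ∀ᶠ h in 𝓝[>] (0:ℝ), g h ≤ ε / CN' :=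
    (hgt.eventually_lt_const (by positivity)).mono fun h hh => hh.le
  have hlog : ∀ᶠ h in 𝓝[>] (0:ℝ), CN' * CR' * (|Real.log h| * h ^ ε) ≤ A / 2 := by
    have h1 : Tendsto (fun h : ℝ => |Real.log h| * h ^ ε) (𝓝[>] (0:ℝ)) (𝓝 0) := by
      have h2 := (tendsto_log_mul_rpow_nhdsGT_zero hε).abs
      rw [abs_zero] at h2
      refine h2.congr' ?_
      filter_upwards [self_mem_nhdsWithin] with h hh
      rw [abs_mul, abs_of_pos (Real.rpow_pos_of_pos hh ε)]
    have h2 := h1.const_mul (CN' * CR')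
    rw [mul_zero] at h2
    exact (h2.eventually_lt_const (by positivity)).mono fun h hh => hh.le
  have hpowsmall : ∀ᶠ h in 𝓝[>] (0:ℝ), h ^ (γ - γ') ≤ 1 / 2 :=
    ((hrpow (γ - γ') (by linarith)).eventually_lt_const (by norm_num)).mono fun h hh => hh.le
  have hsmall1 : ∀ᶠ h in 𝓝[>] (0:ℝ), h < 1 :=
    eventually_nhdsWithin_of_eventually_nhds (eventually_lt_nhds (by norm_num : (0:ℝ) < 1))
  filter_upwards [hCN, hf, hMN, hCR, hglt, hlog, hpowsmall, hsmall1, self_mem_nhdsWithin]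
    with h hN hfh hMNh hRh hgh hlogh hpowh h1 hh0
  replace hh0 : 0 < h := hh0
  have hlh : Real.log h < 0 := Real.log_neg hh0 h1
  have habs : |Real.log h| = -Real.log h := abs_of_neg hlh
  have habs0 : (0:ℝ) ≤ |Real.log h| := abs_nonneg _
  have hg0 : 0 ≤ g h := by
    rw [hgdef]
    have := Real.rpow_pos_of_pos hh0 η
    positivity
  have hγsplit : h ^ γ ≤ 1 / 2 * h ^ γ' := by
    have : h ^ γ = h ^ (γ - γ') * h ^ γ' := by
      rw [← Real.rpow_add hh0]; ring_nf
    rw [this]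
    exact mul_le_mul_of_nonneg_right hpowh (Real.rpow_pos_of_pos hh0 γ').le
  have hRh' : ‖R h‖ ≤ CR' * h ^ η := le_trans hRh
    (mul_le_mul_of_nonneg_right (le_max_left _ _) (Real.rpow_pos_of_pos hh0 η).le)
  have hN' : (N h : ℝ) ≤ CN' * |Real.log h| :=
    le_trans hN (mul_le_mul_of_nonneg_right (le_max_left _ _) habs0)
  have hApow : (0:ℝ) < A ^ (N h) := pow_pos hA _
  rcases Nat.eq_zero_or_pos (N h) with h0 | hpos
  · rw [h0] at hMNh ⊢
    simp only [pow_zero, mul_one] at hMNh ⊢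
    calc ‖(1 : H →L[ℂ] H)‖ ≤ h ^ γ := hMNh
      _ ≤ h ^ γ' := Real.rpow_le_rpow_of_exponent_ge hh0 h1.le hγ'γ.le
  · obtain ⟨n, hn⟩ := Nat.exists_eq_succ_of_ne_zero hpos.ne'
    set m := ‖M h‖ with hmdef
    set r := ‖R h‖ with hrdef
    have hm0 : 0 ≤ m := norm_nonneg _
    have hr0 : 0 ≤ r := norm_nonneg _
    have hxa : m + r ≤ A * (1 + g h) := by
      have hfa : m ≤ A * (1 + |f h|) :=
        le_trans hfh (mul_le_mul_of_nonneg_left (by linarith [le_abs_self (f h)]) hA.le)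
      have heq : A * (1 + g h) = A * (1 + |f h|) + CR' * h ^ η := by
        rw [hgdef]; field_simp; ring
      rw [heq]
      exact add_le_add hfa hRh'
    -- step 1 : triangle inequality
    have step1 : ‖(M h + R h) ^ (N h)‖
        ≤ h ^ γ * A ^ (N h) + ((m + r) ^ (N h) - m ^ (N h)) := by
      have t1 : ‖(M h + R h) ^ N h‖
          ≤ ‖(M h) ^ (N h)‖ + ‖(M h + R h) ^ (N h) - (M h) ^ (N h)‖ := by
        have := norm_add_le ((M h) ^ (N h)) ((M h + R h) ^ (N h) - (M h) ^ (N h))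
        simpa using this
      exact le_trans t1 (add_le_add hMNh (key_op _ _ _))
    -- step 2 : real difference bound
    have step2 : (m + r) ^ (N h) - m ^ (N h) ≤ (N h : ℝ) * r * (m + r) ^ n := by
      rw [hn]
      have := real_pow_sub (m + r) m hm0 (by linarith) n
      push_cast
      calc (m + r) ^ (n + 1) - m ^ (n + 1)
          ≤ ((n : ℝ) + 1) * ((m + r) - m) * (m + r) ^ n := this
        _ = ((n : ℝ) + 1) * r * (m + r) ^ n := by ring
    -- step 3 : bound (m+r)^n
    have hexp1 : (m + r) ^ n ≤ A ^ n * Real.exp ((N h : ℝ) * g h) := by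
      calc (m + r) ^ n ≤ (A * (1 + g h)) ^ n := pow_le_pow_left₀ (by positivity) hxa n
        _ = A ^ n * (1 + g h) ^ n := mul_pow _ _ _
        _ ≤ A ^ n * Real.exp (g h) ^ n := by
            refine mul_le_mul_of_nonneg_left (pow_le_pow_left₀ (by linarith) ?_ n) (by positivity)
            linarith [Real.add_one_le_exp (g h)]
        _ = A ^ n * Real.exp ((n : ℝ) * g h) := by rw [← Real.exp_nat_mul]
        _ ≤ A ^ n * Real.exp ((N h : ℝ) * g h) := by
            refine mul_le_mul_of_nonneg_left (Real.exp_le_exp.mpr ?_) (by positivity)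
            refine mul_le_mul_of_nonneg_right ?_ hg0
            rw [hn]; push_cast; linarith
    have hexp2 : Real.exp ((N h : ℝ) * g h) ≤ h ^ (-ε) := by
      have hb : (N h : ℝ) * g h ≤ ε * |Real.log h| := by
        calc (N h : ℝ) * g h ≤ (CN' * |Real.log h|) * (ε / CN') :=
              mul_le_mul hN' hgh hg0 (by positivity)
          _ = ε * |Real.log h| := by field_simp
      calc Real.exp ((N h : ℝ) * g h) ≤ Real.exp (ε * |Real.log h|) := Real.exp_le_exp.mpr hb
        _ = h ^ (-ε) := by
            rw [Real.rpow_def_of_pos hh0, habs]; congr 1; ring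
    have step3 : (m + r) ^ n ≤ A ^ n * h ^ (-ε) :=
      le_trans hexp1 (mul_le_mul_of_nonneg_left hexp2 (by positivity))
    -- step 4 : combine remainder
    have hrem : (N h : ℝ) * r * (m + r) ^ n
        ≤ (CN' * |Real.log h|) * (CR' * h ^ η) * (A ^ n * h ^ (-ε)) := by
      refine mul_le_mul (mul_le_mul hN' hRh' hr0 (by positivity)) step3 (by positivity) ?_
      have := Real.rpow_pos_of_pos hh0 η
      positivity
    have hpow_id : h ^ η * h ^ (-ε) = h ^ ε * h ^ γ' := by
      rw [← Real.rpow_add hh0, ← Real.rpow_add hh0]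
      congr 1
      rw [hεdef]; ring
    have hident : (CN' * |Real.log h|) * (CR' * h ^ η) * (A ^ n * h ^ (-ε))
        = (CN' * CR' * (|Real.log h| * h ^ ε)) * (h ^ γ' * A ^ n) := by
      linear_combination (CN' * CR' * |Real.log h| * A ^ n) * hpow_id
    have hrem2 : (N h : ℝ) * r * (m + r) ^ n ≤ (A / 2) * (h ^ γ' * A ^ n) := by
      rw [hident] at hrem
      refine le_trans hrem (mul_le_mul_of_nonneg_right hlogh ?_)
      have := Real.rpow_pos_of_pos hh0 γ'
      positivity
    have hfinal : (A / 2) * (h ^ γ' * A ^ n) = 1 / 2 * h ^ γ' * A ^ (N h) := by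
      rw [hn, pow_succ]; ring
    calc ‖(M h + R h) ^ (N h)‖
        ≤ h ^ γ * A ^ (N h) + ((m + r) ^ (N h) - m ^ (N h)) := step1
      _ ≤ h ^ γ * A ^ (N h) + (N h : ℝ) * r * (m + r) ^ n := by linarith
      _ ≤ 1 / 2 * h ^ γ' * A ^ (N h) + (A / 2) * (h ^ γ' * A ^ n) :=
          add_le_add (mul_le_mul_of_nonneg_right hγsplit hApow.le) hrem2
      _ = h ^ γ' * A ^ (N h) := by rw [hfinal]; ring
end

section
/- Fiber Contraction Theorem: Let (X,d) be a metric space and h : X → X a map with an attractive fixed point x₀ (meaning h(x₀) = x₀ and h^n(x) → x₀ for all x ∈ X). Let Y be a metric space and (g_x : Y → Y)_{x∈X} a family of maps. Define H : X × Y → X × Y by H(x,y) = (h(x), g_x(y)). Assume: (i) H is continuous; (ii) for all x ∈ X, limsup_{n→∞} Lip(g_{h^n(x)}) < 1, where Lip denotes the smallest Lipschitz constant; (iii) y₀ is an attractive fixed point of g_{x₀}. Then (x₀, y₀) is an attractive fixed point of H. -/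
open Filter Topology

theorem aux_rec_tendsto {K : ℝ} (hK0 : 0 ≤ K) (hK1 : K < 1) (a ε : ℕ → ℝ)
    (ha0 : ∀ n, 0 ≤ a n)
    (hrec : ∀ᶠ n in atTop, a (n + 1) ≤ K * a n + ε n)
    (hε : Tendsto ε atTop (𝓝 0)) : Tendsto a atTop (𝓝 0) := by
  rw [Metric.tendsto_atTop]
  intro δ hδ
  obtain ⟨N₁, hN₁⟩ := eventually_atTop.mp hrec
  have h1K : 0 < 1 - K := by linarith
  have hδ2 : 0 < (1 - K) * δ / 2 := by positivity
  obtain ⟨N₂, hN₂⟩ := Metric.tendsto_atTop.mp hε _ hδ2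
  set M := max N₁ N₂ with hM
  have key : ∀ m, a (M + m) - δ / 2 ≤ K ^ m * (a M - δ / 2) := by
    intro m
    induction m with
    | zero => simp
    | succ m ih =>
      have h1 : a (M + m + 1) ≤ K * a (M + m) + ε (M + m) :=
        hN₁ _ (le_trans (le_max_left _ _) (Nat.le_add_right _ _))
      have h2 : ε (M + m) ≤ (1 - K) * δ / 2 := by
        have := hN₂ (M + m) (le_trans (le_max_right _ _) (Nat.le_add_right _ _))
        rw [Real.dist_eq, sub_zero] at this
        exact (abs_lt.mp this).2.le
      have h3 : K * (a (M + m) - δ / 2) ≤ K * (K ^ m * (a M - δ / 2)) :=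
        mul_le_mul_of_nonneg_left ih hK0
      calc a (M + (m + 1)) - δ / 2 = a (M + m + 1) - δ / 2 := by rw [Nat.add_succ]
        _ ≤ K * (a (M + m) - δ / 2) := by linarith
        _ ≤ K * (K ^ m * (a M - δ / 2)) := h3
        _ = K ^ (m + 1) * (a M - δ / 2) := by ring
  have hC : Tendsto (fun m => K ^ m * (a M - δ / 2)) atTop (𝓝 0) := by
    simpa using (tendsto_pow_atTop_nhds_zero_of_lt_one hK0 hK1).mul_const (a M - δ / 2)
  obtain ⟨m₀, hm₀⟩ := Metric.tendsto_atTop.mp hC (δ / 2) (by linarith)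
  refine ⟨M + m₀, fun n hn => ?_⟩
  have hn' : M + (n - M) = n := by omega
  have hk := key (n - M)
  rw [hn'] at hk
  have hm := hm₀ (n - M) (by omega)
  rw [Real.dist_eq, sub_zero] at hm
  have habs : K ^ (n - M) * (a M - δ / 2) ≤ |K ^ (n - M) * (a M - δ / 2)| := le_abs_self _
  rw [Real.dist_eq, sub_zero, abs_of_nonneg (ha0 n)]
  linarith

/-- Fiber Contraction Theorem: if `h : X → X` has an attractive fixed point
`x₀`, `H (x,y) = (h x, g x y)` is continuous, the Lipschitz constants of `g (h^[n] x)` are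
eventually bounded by some `K < 1` (i.e. the limsup of the best Lipschitz constants is `< 1`),
and `y₀` is an attractive fixed point of `g x₀`, then `(x₀, y₀)` is an attractive fixed
point of `H`. -/
theorem stmt2 {X Y : Type*} [MetricSpace X] [MetricSpace Y]
    (h : X → X) (x₀ : X) (hfix : h x₀ = x₀)
    (hattr : ∀ x : X, Tendsto (fun n => h^[n] x) atTop (𝓝 x₀))
    (g : X → Y → Y) (y₀ : Y)
    (hcont : Continuous (fun p : X × Y => (h p.1, g p.1 p.2)))
    (hlip : ∀ x : X, ∃ K : NNReal, (K : ℝ) < 1 ∧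
      ∀ᶠ n in atTop, LipschitzWith K (g (h^[n] x)))
    (hgfix : g x₀ y₀ = y₀)
    (hgattr : ∀ y : Y, Tendsto (fun n => (g x₀)^[n] y) atTop (𝓝 y₀)) :
    (h x₀, g x₀ y₀) = (x₀, y₀) ∧
    ∀ p : X × Y,
      Tendsto (fun n => (fun q : X × Y => (h q.1, g q.1 q.2))^[n] p) atTop (𝓝 (x₀, y₀)) := by
  set F := fun q : X × Y => (h q.1, g q.1 q.2) with hF
  refine ⟨by simp [hfix, hgfix], fun p => ?_⟩
  obtain ⟨K, hK1, hKev⟩ := hlip p.1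
  have hfst : ∀ n, (F^[n] p).1 = h^[n] p.1 := by
    intro n
    induction n with
    | zero => rfl
    | succ n ih =>
      rw [Function.iterate_succ_apply', Function.iterate_succ_apply']
      simp only [hF] at ih ⊢; simp [ih]
  have hφ : Continuous (fun q : X × Y => g q.1 q.2) := hcont.snd
  have hεt : Tendsto (fun n => dist (g (h^[n] p.1) y₀) y₀) atTop (𝓝 0) := by
    have h1 : Tendsto (fun n => (h^[n] p.1, y₀)) atTop (𝓝 (x₀, y₀)) :=
      (hattr p.1).prodMk_nhds tendsto_const_nhds
    have h2 : Tendsto (fun n => g (h^[n] p.1) y₀) atTop (𝓝 (g x₀ y₀)) :=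
      (hφ.tendsto (x₀, y₀)).comp h1
    rw [hgfix] at h2
    simpa using h2.dist (tendsto_const_nhds (x := y₀))
  have hrec : ∀ᶠ n in atTop, dist ((F^[n + 1] p).2) y₀ ≤
      (K : ℝ) * dist ((F^[n] p).2) y₀ + dist (g (h^[n] p.1) y₀) y₀ := by
    filter_upwards [hKev] with n hn
    have e : (F^[n + 1] p).2 = g (h^[n] p.1) ((F^[n] p).2) := by
      rw [Function.iterate_succ_apply']
      have hfn := hfst n; simp only [hF] at hfn ⊢; simp [hfn]
    rw [e]
    calc dist (g (h^[n] p.1) ((F^[n] p).2)) y₀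
        ≤ dist (g (h^[n] p.1) ((F^[n] p).2)) (g (h^[n] p.1) y₀)
          + dist (g (h^[n] p.1) y₀) y₀ := dist_triangle _ _ _
      _ ≤ (K : ℝ) * dist ((F^[n] p).2) y₀ + dist (g (h^[n] p.1) y₀) y₀ :=
          add_le_add_left (hn.dist_le_mul _ _) _
  have ha : Tendsto (fun n => dist ((F^[n] p).2) y₀) atTop (𝓝 0) :=
    aux_rec_tendsto K.coe_nonneg hK1 _ _ (fun n => dist_nonneg) hrec hεt
  have hsnd : Tendsto (fun n => (F^[n] p).2) atTop (𝓝 y₀) :=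
    tendsto_iff_dist_tendsto_zero.mpr ha
  have hfst' : Tendsto (fun n => (F^[n] p).1) atTop (𝓝 x₀) := by
    simp only [hfst]; exact hattr p.1
  have := hfst'.prodMk_nhds hsnd
  simpa using this
end

section
/- Cotlar–Stein-type cloud estimate: Let B₁,…,B_r be bounded operators on a Hilbert space, and suppose there is an 'interaction' relation on {1,…,r} such that each index i interacts with at most C₀ indices j (including itself), and whenever i and j do not interact, ‖B_i* B_j‖ ≤ ε and ‖B_j B_i*‖ ≤ ε. Then ‖Σ_{i=1}^r B_i‖ ≤ C₀ max_i ‖B_i‖ + r·ε^{1/2}. -/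
open ContinuousLinearMap

section CotlarAux

/-- Noncommutative expansion of a power of a sum. -/
lemma cotlar_sum_pow {R : Type*} [Semiring R] {P : Type*} [Fintype P] (g : P → R) :
    ∀ n : ℕ, (∑ p, g p) ^ n = ∑ f : Fin n → P, (List.ofFn fun k => g (f k)).prod := by
  intro n
  induction n with
  | zero => simp
  | succ n ih =>
    have e : ∑ f : Fin (n+1) → P, (List.ofFn fun k => g (f k)).prod
        = ∑ q : P × (Fin n → P), (List.ofFn fun k => g ((Fin.cons q.1 q.2 : Fin (n+1) → P) k)).prod :=
      (Fintype.sum_equiv (Fin.consEquiv fun _ : Fin (n+1) => P)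
        (fun q => (List.ofFn fun k => g ((Fin.cons q.1 q.2 : Fin (n+1) → P) k)).prod)
        (fun f => (List.ofFn fun k => g (f k)).prod) (fun q => rfl)).symm
    rw [pow_succ']
    rw [ih]
    rw [e]
    rw [Fintype.sum_prod_type]
    rw [Finset.sum_mul_sum]
    refine Finset.sum_congr rfl fun p _ => ?_
    refine Finset.sum_congr rfl fun f _ => ?_
    rw [List.ofFn_succ]
    simp

/-- Regrouping a product of `n+1` factors `u k * v k` as
`u 0 * (∏ (v k * u (k+1))) * v n`. -/
lemma cotlar_regroup {R : Type*} [Monoid R] {P : Type*} (u v : P → R) :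
    ∀ n (f : Fin (n+1) → P),
      (List.ofFn fun k => u (f k) * v (f k)).prod
        = u (f 0) * (List.ofFn fun k : Fin n => v (f k.castSucc) * u (f k.succ)).prod
            * v (f (Fin.last n)) := by
  intro n
  induction n with
  | zero => intro f; simp [Fin.last]
  | succ n ih =>
    intro f
    rw [List.ofFn_succ]
    rw [List.prod_cons]
    rw [ih (fun k => f k.succ)]
    rw [List.ofFn_succ (f := fun k : Fin (n+1) => v (f k.castSucc) * u (f k.succ))]
    rw [List.prod_cons]
    simp only [Fin.succ_last, Fin.castSucc_zero, Fin.succ_castSucc]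
    simp [mul_assoc]

lemma cotlar_sqrt_prod {α : Type*} (s : Finset α) (f : α → ℝ) (h : ∀ i, 0 ≤ f i) :
    Real.sqrt (∏ i ∈ s, f i) = ∏ i ∈ s, Real.sqrt (f i) := by
  classical
  induction s using Finset.induction with
  | empty => simp
  | insert _ _ hx ih =>
    rw [Finset.prod_insert hx, Finset.prod_insert hx, Real.sqrt_mul (h _), ih]

variable {ι : Type*} [Fintype ι] {s₁ s₂ : ι → ι → ℝ} {K : ℝ}

include s₂ in
lemma cotlar_pairSum (h1 : ∀ a b, 0 ≤ s₁ a b) (h2 : ∀ a b, 0 ≤ s₂ a b)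
    (row1 : ∀ a, ∑ c, s₁ a c ≤ K) (row2 : ∀ a, ∑ c, s₂ a c ≤ K)
    (hK : 0 ≤ K) (w : ι → ℝ) (W : ℝ) (hw0 : ∀ c, 0 ≤ w c) (hw : ∀ c, w c ≤ W)
    (hW : 0 ≤ W) (b : ι) :
    ∑ p : ι × ι, s₂ b p.1 * (s₁ p.1 p.2 * w p.2) ≤ K ^ 2 * W := by
  rw [Fintype.sum_prod_type]
  have step1 : ∀ a : ι, ∑ c, s₂ b a * (s₁ a c * w c) ≤ s₂ b a * (K * W) := by
    intro a
    rw [← Finset.mul_sum]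
    refine mul_le_mul_of_nonneg_left ?_ (h2 b a)
    calc ∑ c, s₁ a c * w c ≤ ∑ c, s₁ a c * W :=
          Finset.sum_le_sum fun c _ => mul_le_mul_of_nonneg_left (hw c) (h1 a c)
      _ = (∑ c, s₁ a c) * W := by rw [Finset.sum_mul]
      _ ≤ K * W := mul_le_mul_of_nonneg_right (row1 a) hW
  calc ∑ a, ∑ c, s₂ b a * (s₁ a c * w c) ≤ ∑ a, s₂ b a * (K * W) :=
        Finset.sum_le_sum fun a _ => step1 a
    _ = (∑ a, s₂ b a) * (K * W) := by rw [Finset.sum_mul]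
    _ ≤ K * (K * W) := mul_le_mul_of_nonneg_right (row2 b) (by positivity)
    _ = K ^ 2 * W := by ring

lemma cotlar_chain (h1 : ∀ a b, 0 ≤ s₁ a b) (h2 : ∀ a b, 0 ≤ s₂ a b)
    (row1 : ∀ a, ∑ c, s₁ a c ≤ K) (row2 : ∀ a, ∑ c, s₂ a c ≤ K) (hK : 0 ≤ K) :
    ∀ (n : ℕ) (b : ι),
    ∑ f : Fin (n+1) → ι × ι,
      s₂ b (f 0).1 * ((∏ k, s₁ (f k).1 (f k).2)
        * ∏ k : Fin n, s₂ (f k.castSucc).2 (f k.succ).1) ≤ K ^ (2*n+2) := by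
  intro n
  induction n with
  | zero =>
    intro b
    have e : ∑ f : Fin 1 → ι × ι,
        s₂ b (f 0).1 * ((∏ k, s₁ (f k).1 (f k).2)
          * ∏ k : Fin 0, s₂ (f k.castSucc).2 (f k.succ).1)
        = ∑ p : ι × ι, s₂ b p.1 * (s₁ p.1 p.2 * 1) := by
      refine Fintype.sum_equiv (Equiv.funUnique (Fin 1) (ι × ι)) _ _ fun f => by simp
    rw [e]
    have := cotlar_pairSum (s₂ := s₂) h1 h2 row1 row2 hK (fun _ => 1) 1
      (fun _ => zero_le_one) (fun _ => le_refl 1) zero_le_one b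
    simpa using this
  | succ n ih =>
    intro b
    set w : ι → ℝ := fun c => ∑ f : Fin (n+1) → ι × ι,
      s₂ c (f 0).1 * ((∏ k, s₁ (f k).1 (f k).2)
        * ∏ k : Fin n, s₂ (f k.castSucc).2 (f k.succ).1) with hwdef
    have hw0 : ∀ c, 0 ≤ w c := by
      intro c
      refine Finset.sum_nonneg fun f _ => ?_
      exact mul_nonneg (h2 _ _) (mul_nonneg (Finset.prod_nonneg fun k _ => h1 _ _)
        (Finset.prod_nonneg fun k _ => h2 _ _))
    have e : ∑ f : Fin (n+2) → ι × ι,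
        s₂ b (f 0).1 * ((∏ k, s₁ (f k).1 (f k).2)
          * ∏ k : Fin (n+1), s₂ (f k.castSucc).2 (f k.succ).1)
        = ∑ p : ι × ι, s₂ b p.1 * (s₁ p.1 p.2 * w p.2) := by
      have e1 : ∑ f : Fin (n+2) → ι × ι,
          s₂ b (f 0).1 * ((∏ k, s₁ (f k).1 (f k).2)
            * ∏ k : Fin (n+1), s₂ (f k.castSucc).2 (f k.succ).1)
          = ∑ q : (ι × ι) × (Fin (n+1) → ι × ι),
              s₂ b ((Fin.cons q.1 q.2 : Fin (n+2) → ι × ι) 0).1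
                * ((∏ k, s₁ ((Fin.cons q.1 q.2 : Fin (n+2) → ι × ι) k).1
                      ((Fin.cons q.1 q.2 : Fin (n+2) → ι × ι) k).2)
                  * ∏ k : Fin (n+1),
                      s₂ ((Fin.cons q.1 q.2 : Fin (n+2) → ι × ι) k.castSucc).2
                        ((Fin.cons q.1 q.2 : Fin (n+2) → ι × ι) k.succ).1) :=
        (Fintype.sum_equiv (Fin.consEquiv fun _ : Fin (n+2) => ι × ι) _ _ fun q => rfl).symm
      rw [e1, Fintype.sum_prod_type]
      refine Finset.sum_congr rfl fun p _ => ?_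
      rw [hwdef, Finset.mul_sum, Finset.mul_sum]
      refine Finset.sum_congr rfl fun f _ => ?_
      have eA : (∏ k, s₁ ((Fin.cons p f : Fin (n+2) → ι × ι) k).1
          ((Fin.cons p f : Fin (n+2) → ι × ι) k).2)
          = s₁ p.1 p.2 * ∏ k, s₁ (f k).1 (f k).2 := by
        rw [Fin.prod_univ_succ]; simp
      have eB : (∏ k : Fin (n+1), s₂ ((Fin.cons p f : Fin (n+2) → ι × ι) k.castSucc).2
          ((Fin.cons p f : Fin (n+2) → ι × ι) k.succ).1)
          = s₂ p.2 (f 0).1 * ∏ k : Fin n, s₂ (f k.castSucc).2 (f k.succ).1 := by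
        rw [Fin.prod_univ_succ]
        simp only [Fin.castSucc_zero, Fin.cons_zero, ← Fin.succ_castSucc, Fin.cons_succ]
      rw [eA, eB, Fin.cons_zero]
      ring
    rw [e]
    have := cotlar_pairSum (s₂ := s₂) h1 h2 row1 row2 hK w (K ^ (2*n+2)) hw0
      (fun c => ih c) (by positivity) b
    calc ∑ p : ι × ι, s₂ b p.1 * (s₁ p.1 p.2 * w p.2) ≤ K ^ 2 * K ^ (2*n+2) := this
      _ = K ^ (2*(n+1)+2) := by ring

lemma cotlar_total (h1 : ∀ a b, 0 ≤ s₁ a b) (h2 : ∀ a b, 0 ≤ s₂ a b)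
    (row1 : ∀ a, ∑ c, s₁ a c ≤ K) (row2 : ∀ a, ∑ c, s₂ a c ≤ K) (hK : 0 ≤ K) :
    ∀ n : ℕ,
    ∑ f : Fin (n+1) → ι × ι,
      (∏ k, s₁ (f k).1 (f k).2) * ∏ k : Fin n, s₂ (f k.castSucc).2 (f k.succ).1
      ≤ (Fintype.card ι : ℝ) * K ^ (2*n+1) := by
  have pairRow : ∑ p : ι × ι, s₁ p.1 p.2 ≤ (Fintype.card ι : ℝ) * K := by
    rw [Fintype.sum_prod_type]
    calc ∑ a, ∑ c, s₁ a c ≤ ∑ _a : ι, K := Finset.sum_le_sum fun a _ => row1 a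
      _ = (Fintype.card ι : ℝ) * K := by
          rw [Finset.sum_const, Finset.card_univ, nsmul_eq_mul]
  intro n
  cases n with
  | zero =>
    have e : ∑ f : Fin 1 → ι × ι,
        (∏ k, s₁ (f k).1 (f k).2) * ∏ k : Fin 0, s₂ (f k.castSucc).2 (f k.succ).1
        = ∑ p : ι × ι, s₁ p.1 p.2 :=
      Fintype.sum_equiv (Equiv.funUnique (Fin 1) (ι × ι)) _ _ fun f => by simp
    rw [e]
    simpa using pairRow
  | succ n =>
    set w : ι → ℝ := fun c => ∑ f : Fin (n+1) → ι × ι,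
      s₂ c (f 0).1 * ((∏ k, s₁ (f k).1 (f k).2)
        * ∏ k : Fin n, s₂ (f k.castSucc).2 (f k.succ).1) with hwdef
    have e : ∑ f : Fin (n+2) → ι × ι,
        (∏ k, s₁ (f k).1 (f k).2) * ∏ k : Fin (n+1), s₂ (f k.castSucc).2 (f k.succ).1
        = ∑ p : ι × ι, s₁ p.1 p.2 * w p.2 := by
      have e1 : ∑ f : Fin (n+2) → ι × ι,
          (∏ k, s₁ (f k).1 (f k).2) * ∏ k : Fin (n+1), s₂ (f k.castSucc).2 (f k.succ).1
          = ∑ q : (ι × ι) × (Fin (n+1) → ι × ι),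
              (∏ k, s₁ ((Fin.cons q.1 q.2 : Fin (n+2) → ι × ι) k).1
                  ((Fin.cons q.1 q.2 : Fin (n+2) → ι × ι) k).2)
                * ∏ k : Fin (n+1),
                    s₂ ((Fin.cons q.1 q.2 : Fin (n+2) → ι × ι) k.castSucc).2
                      ((Fin.cons q.1 q.2 : Fin (n+2) → ι × ι) k.succ).1 :=
        (Fintype.sum_equiv (Fin.consEquiv fun _ : Fin (n+2) => ι × ι) _ _ fun q => rfl).symm
      rw [e1, Fintype.sum_prod_type]
      refine Finset.sum_congr rfl fun p _ => ?_
      rw [hwdef, Finset.mul_sum]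
      refine Finset.sum_congr rfl fun f _ => ?_
      have eA : (∏ k, s₁ ((Fin.cons p f : Fin (n+2) → ι × ι) k).1
          ((Fin.cons p f : Fin (n+2) → ι × ι) k).2)
          = s₁ p.1 p.2 * ∏ k, s₁ (f k).1 (f k).2 := by
        rw [Fin.prod_univ_succ]; simp
      have eB : (∏ k : Fin (n+1), s₂ ((Fin.cons p f : Fin (n+2) → ι × ι) k.castSucc).2
          ((Fin.cons p f : Fin (n+2) → ι × ι) k.succ).1)
          = s₂ p.2 (f 0).1 * ∏ k : Fin n, s₂ (f k.castSucc).2 (f k.succ).1 := by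
        rw [Fin.prod_univ_succ]
        simp only [Fin.castSucc_zero, Fin.cons_zero, ← Fin.succ_castSucc, Fin.cons_succ]
      rw [eA, eB]
      ring
    rw [e]
    calc ∑ p : ι × ι, s₁ p.1 p.2 * w p.2
        ≤ ∑ p : ι × ι, s₁ p.1 p.2 * K ^ (2*n+2) :=
          Finset.sum_le_sum fun p _ =>
            mul_le_mul_of_nonneg_left
              (cotlar_chain h1 h2 row1 row2 hK n p.2) (h1 _ _)
      _ = (∑ p : ι × ι, s₁ p.1 p.2) * K ^ (2*n+2) := by rw [Finset.sum_mul]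
      _ ≤ ((Fintype.card ι : ℝ) * K) * K ^ (2*n+2) :=
          mul_le_mul_of_nonneg_right pairRow (by positivity)
      _ = (Fintype.card ι : ℝ) * K ^ (2*(n+1)+1) := by ring

end CotlarAux

/-- norm of a (possibly empty) `ofFn` product of continuous linear maps. -/
lemma cotlar_norm_ofFn_prod {H : Type*} [NormedAddCommGroup H] [InnerProductSpace ℂ H]
    [CompleteSpace H] {m : ℕ} (h : Fin m → H →L[ℂ] H) :
    ‖(List.ofFn h).prod‖ ≤ ∏ k, ‖h k‖ := by
  cases m with
  | zero =>
    simp only [List.ofFn_zero, List.prod_nil, Finset.univ_eq_empty, Finset.prod_empty]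
    exact ContinuousLinearMap.norm_id_le
  | succ m =>
    calc ‖(List.ofFn h).prod‖ ≤ ((List.ofFn h).map norm).prod :=
          List.norm_prod_le' (by simp)
      _ = ∏ k, ‖h k‖ := by rw [List.map_ofFn, List.prod_ofFn]; rfl

/-- selfadjoint elements: norm of `2^m`-th power. -/
lemma cotlar_sa_pow_norm {H : Type*} [NormedAddCommGroup H] [InnerProductSpace ℂ H]
    [CompleteSpace H] (a : H →L[ℂ] H) (ha : IsSelfAdjoint a) :
    ∀ m : ℕ, ‖a ^ (2^m)‖ = ‖a‖ ^ (2^m) := by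
  have sq_norm : ∀ b : H →L[ℂ] H, IsSelfAdjoint b → ‖b ^ 2‖ = ‖b‖ ^ 2 := by
    intro b hb
    have hb2 : b ^ 2 = star b * b := by rw [sq, hb.star_eq]
    rw [hb2, CStarRing.norm_star_mul_self, sq]
  intro m
  induction m with
  | zero => simp
  | succ m ih =>
    have : a ^ (2^(m+1)) = (a ^ (2^m)) ^ 2 := by
      rw [← pow_mul, pow_succ]
    rw [this, sq_norm _ (ha.pow _), ih, ← pow_mul, pow_succ]

set_option maxHeartbeats 1000000 in
/-- Cotlar–Stein-type cloud estimate: if each index `i` interacts with at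
most `C₀` indices (including itself), non-interacting pairs satisfy
`‖B_i* B_j‖ ≤ ε` and `‖B_j B_i*‖ ≤ ε`, and `‖B_i‖ ≤ M` for all `i`, then
`‖∑ B_i‖ ≤ C₀ M + r √ε`. -/
theorem stmt13 {H : Type*} [NormedAddCommGroup H] [InnerProductSpace ℂ H] [CompleteSpace H]
    (r : ℕ) (hr : 0 < r) (B : Fin r → H →L[ℂ] H)
    (Rel : Fin r → Fin r → Prop) (C₀ : ℕ)
    (hself : ∀ i, Rel i i)
    (hcard : ∀ i, Set.ncard {j | Rel i j} ≤ C₀)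
    (ε : ℝ) (hε : 0 ≤ ε)
    (horth1 : ∀ i j, ¬ Rel i j → ‖(adjoint (B i)) ∘L (B j)‖ ≤ ε)
    (horth2 : ∀ i j, ¬ Rel i j → ‖(B j) ∘L (adjoint (B i))‖ ≤ ε)
    (M : ℝ) (hM : ∀ i, ‖B i‖ ≤ M) :
    ‖∑ i, B i‖ ≤ (C₀ : ℝ) * M + (r : ℝ) * Real.sqrt ε := by
  classical
  have hM0 : 0 ≤ M := le_trans (norm_nonneg _) (hM ⟨0, hr⟩)
  set K : ℝ := (C₀ : ℝ) * M + (r : ℝ) * Real.sqrt ε with hKdef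
  have hK0 : 0 ≤ K := by positivity
  -- kernels
  set s₁ : Fin r → Fin r → ℝ := fun a c => Real.sqrt ‖star (B a) * B c‖ with hs₁def
  set s₂ : Fin r → Fin r → ℝ := fun a c => Real.sqrt ‖B a * star (B c)‖ with hs₂def
  have h1 : ∀ a c, 0 ≤ s₁ a c := fun a c => Real.sqrt_nonneg _
  have h2 : ∀ a c, 0 ≤ s₂ a c := fun a c => Real.sqrt_nonneg _
  have hs₁M : ∀ a c, s₁ a c ≤ M := by
    intro a c
    have : ‖star (B a) * B c‖ ≤ M * M := by
      calc ‖star (B a) * B c‖ ≤ ‖star (B a)‖ * ‖B c‖ := norm_mul_le _ _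
        _ ≤ M * M := by
            rw [norm_star]
            exact mul_le_mul (hM a) (hM c) (norm_nonneg _) hM0
    calc s₁ a c ≤ Real.sqrt (M * M) := Real.sqrt_le_sqrt this
      _ = M := Real.sqrt_mul_self hM0
  have hs₂M : ∀ a c, s₂ a c ≤ M := by
    intro a c
    have : ‖B a * star (B c)‖ ≤ M * M := by
      calc ‖B a * star (B c)‖ ≤ ‖B a‖ * ‖star (B c)‖ := norm_mul_le _ _
        _ ≤ M * M := by
            rw [norm_star]
            exact mul_le_mul (hM a) (hM c) (norm_nonneg _) hM0
    calc s₂ a c ≤ Real.sqrt (M * M) := Real.sqrt_le_sqrt this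
      _ = M := Real.sqrt_mul_self hM0
  have hs₁ε : ∀ a c, ¬ Rel a c → s₁ a c ≤ Real.sqrt ε := by
    intro a c h
    exact Real.sqrt_le_sqrt (by
      have := horth1 a c h
      rw [ContinuousLinearMap.star_eq_adjoint]
      exact this)
  have hs₂ε : ∀ a c, ¬ Rel a c → s₂ a c ≤ Real.sqrt ε := by
    intro a c h
    have key : ‖B a * star (B c)‖ = ‖B c * star (B a)‖ := by
      rw [← norm_star (B c * star (B a))]
      congr 1
      rw [star_mul, star_star]
    refine Real.sqrt_le_sqrt ?_
    rw [hs₂def] at *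
    show ‖B a * star (B c)‖ ≤ ε
    rw [key]
    have := horth2 a c h
    rw [ContinuousLinearMap.star_eq_adjoint]
    exact this
  -- row sums
  have rowgen : ∀ (t : Fin r → Fin r → ℝ), (∀ a c, 0 ≤ t a c) → (∀ a c, t a c ≤ M) →
      (∀ a c, ¬ Rel a c → t a c ≤ Real.sqrt ε) → ∀ a, ∑ c, t a c ≤ K := by
    intro t ht0 htM htε a
    have hcardF : (Finset.univ.filter (fun c => Rel a c)).card ≤ C₀ := by
      have h1' := hcard a
      rw [Set.ncard_eq_toFinset_card' {j | Rel a j}] at h1'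
      rwa [Set.toFinset_setOf] at h1'
    rw [← Finset.sum_filter_add_sum_filter_not Finset.univ (fun c => Rel a c)]
    have b1 : ∑ c ∈ Finset.univ.filter (fun c => Rel a c), t a c ≤ (C₀ : ℝ) * M := by
      calc ∑ c ∈ Finset.univ.filter (fun c => Rel a c), t a c
          ≤ (Finset.univ.filter (fun c => Rel a c)).card • M :=
            Finset.sum_le_card_nsmul _ _ _ (fun c _ => htM a c)
        _ = ((Finset.univ.filter (fun c => Rel a c)).card : ℝ) * M := nsmul_eq_mul _ _
        _ ≤ (C₀ : ℝ) * M := by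
            exact mul_le_mul_of_nonneg_right (by exact_mod_cast hcardF) hM0
    have b2 : ∑ c ∈ Finset.univ.filter (fun c => ¬ Rel a c), t a c
        ≤ (r : ℝ) * Real.sqrt ε := by
      calc ∑ c ∈ Finset.univ.filter (fun c => ¬ Rel a c), t a c
          ≤ (Finset.univ.filter (fun c => ¬ Rel a c)).card • Real.sqrt ε :=
            Finset.sum_le_card_nsmul _ _ _ (fun c hc => by
              simp only [Finset.mem_filter] at hc
              exact htε a c hc.2)
        _ = ((Finset.univ.filter (fun c => ¬ Rel a c)).card : ℝ) * Real.sqrt ε :=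
            nsmul_eq_mul _ _
        _ ≤ (r : ℝ) * Real.sqrt ε := by
            refine mul_le_mul_of_nonneg_right ?_ (Real.sqrt_nonneg _)
            have : (Finset.univ.filter (fun c => ¬ Rel a c)).card ≤ r := by
              calc (Finset.univ.filter (fun c => ¬ Rel a c)).card
                  ≤ (Finset.univ : Finset (Fin r)).card := Finset.card_filter_le _ _
                _ = r := by simp
            exact_mod_cast this
    linarith
  have row1 : ∀ a, ∑ c, s₁ a c ≤ K := rowgen s₁ h1 hs₁M hs₁ε
  have row2 : ∀ a, ∑ c, s₂ a c ≤ K := rowgen s₂ h2 hs₂M hs₂ε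
  -- the operator S and its powers
  set T : H →L[ℂ] H := ∑ i, B i with hTdef
  set g : Fin r × Fin r → (H →L[ℂ] H) := fun p => star (B p.1) * B p.2 with hgdef
  have hSsum : star T * T = ∑ p : Fin r × Fin r, g p := by
    rw [hTdef, star_sum, Finset.sum_mul_sum, Fintype.sum_prod_type]
  set S : H →L[ℂ] H := star T * T with hSdef
  have hSsa : IsSelfAdjoint S := IsSelfAdjoint.star_mul_self T
  have hST : ‖S‖ = ‖T‖ * ‖T‖ := CStarRing.norm_star_mul_self
  -- per-term norm bound
  have term_bound : ∀ (n : ℕ) (f : Fin (n+1) → Fin r × Fin r),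
      ‖(List.ofFn fun k => g (f k)).prod‖
        ≤ M * ((∏ k, s₁ (f k).1 (f k).2)
            * ∏ k : Fin n, s₂ (f k.castSucc).2 (f k.succ).1) := by
    intro n f
    set X : H →L[ℂ] H := (List.ofFn fun k => g (f k)).prod with hXdef
    have bound1 : ‖X‖ ≤ ∏ k, ‖g (f k)‖ := cotlar_norm_ofFn_prod _
    have bound2 : ‖X‖ ≤ M * M * ∏ k : Fin n, ‖B (f k.castSucc).2 * star (B (f k.succ).1)‖ := by
      have regroup := cotlar_regroup (fun p : Fin r × Fin r => star (B p.1)) (fun p : Fin r × Fin r => B p.2) n f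
      rw [hXdef]
      rw [show (List.ofFn fun k => g (f k))
          = (List.ofFn fun k => star (B (f k).1) * B (f k).2) from rfl]
      rw [regroup]
      calc ‖star (B (f 0).1)
            * (List.ofFn fun k : Fin n => B (f k.castSucc).2 * star (B (f k.succ).1)).prod
            * B (f (Fin.last n)).2‖
          ≤ ‖star (B (f 0).1)
              * (List.ofFn fun k : Fin n => B (f k.castSucc).2 * star (B (f k.succ).1)).prod‖
            * ‖B (f (Fin.last n)).2‖ := norm_mul_le _ _
        _ ≤ (‖star (B (f 0).1)‖
              * ‖(List.ofFn fun k : Fin n => B (f k.castSucc).2 * star (B (f k.succ).1)).prod‖)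
            * ‖B (f (Fin.last n)).2‖ :=
            mul_le_mul_of_nonneg_right (norm_mul_le _ _) (norm_nonneg _)
        _ ≤ (M * ∏ k : Fin n, ‖B (f k.castSucc).2 * star (B (f k.succ).1)‖) * M := by
            refine mul_le_mul ?_ (hM _) (norm_nonneg _) ?_
            · refine mul_le_mul ?_ (cotlar_norm_ofFn_prod _) (norm_nonneg _) hM0
              rw [norm_star]; exact hM _
            · exact mul_nonneg hM0 (Finset.prod_nonneg fun k _ => norm_nonneg _)
        _ = M * M * ∏ k : Fin n, ‖B (f k.castSucc).2 * star (B (f k.succ).1)‖ := by ring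
    have hX0 : (0:ℝ) ≤ ‖X‖ := norm_nonneg _
    have hP1 : (0:ℝ) ≤ ∏ k, ‖g (f k)‖ := Finset.prod_nonneg fun k _ => norm_nonneg _
    have key : ‖X‖ ≤ Real.sqrt ((∏ k, ‖g (f k)‖)
        * (M * M * ∏ k : Fin n, ‖B (f k.castSucc).2 * star (B (f k.succ).1)‖)) := by
      rw [← Real.sqrt_mul_self hX0]
      exact Real.sqrt_le_sqrt (mul_le_mul bound1 bound2 hX0 hP1)
    calc ‖X‖ ≤ _ := key
      _ = M * ((∏ k, s₁ (f k).1 (f k).2)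
            * ∏ k : Fin n, s₂ (f k.castSucc).2 (f k.succ).1) := by
          rw [Real.sqrt_mul hP1, Real.sqrt_mul (by positivity : (0:ℝ) ≤ M * M),
            Real.sqrt_mul_self hM0,
            cotlar_sqrt_prod _ _ (fun k => norm_nonneg _),
            cotlar_sqrt_prod _ _ (fun k => norm_nonneg _)]
          ring
  -- norm bound on powers of S
  have powS : ∀ n : ℕ, ‖S ^ (n+1)‖ ≤ (r : ℝ) * M * K ^ (2*n+1) := by
    intro n
    have expand : S ^ (n+1) = ∑ f : Fin (n+1) → Fin r × Fin r, (List.ofFn fun k => g (f k)).prod := by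
      rw [hSsum]; exact cotlar_sum_pow g (n+1)
    rw [expand]
    calc ‖∑ f : Fin (n+1) → Fin r × Fin r, (List.ofFn fun k => g (f k)).prod‖
        ≤ ∑ f : Fin (n+1) → Fin r × Fin r, ‖(List.ofFn fun k => g (f k)).prod‖ :=
          norm_sum_le _ _
      _ ≤ ∑ f : Fin (n+1) → Fin r × Fin r, M * ((∏ k, s₁ (f k).1 (f k).2)
            * ∏ k : Fin n, s₂ (f k.castSucc).2 (f k.succ).1) :=
          Finset.sum_le_sum fun f _ => term_bound n f
      _ = M * ∑ f : Fin (n+1) → Fin r × Fin r, (∏ k, s₁ (f k).1 (f k).2)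
            * ∏ k : Fin n, s₂ (f k.castSucc).2 (f k.succ).1 := by
          rw [Finset.mul_sum]
      _ ≤ M * ((Fintype.card (Fin r) : ℝ) * K ^ (2*n+1)) :=
          mul_le_mul_of_nonneg_left
            (cotlar_total h1 h2 row1 row2 hK0 n) hM0
      _ = (r : ℝ) * M * K ^ (2*n+1) := by
          rw [Fintype.card_fin]; ring
  -- master bound for powers of two
  have master : ∀ m : ℕ, ‖T‖ ^ (2^(m+1)) ≤ (r : ℝ) * M * K ^ (2^(m+1) - 1) := by
    intro m
    obtain ⟨n, hn⟩ : ∃ n, 2^m = n + 1 :=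
      ⟨2^m - 1, (Nat.sub_add_cancel Nat.one_le_two_pow).symm⟩
    have e1 : ‖T‖ ^ (2^(m+1)) = ‖S‖ ^ (2^m) := by
      rw [hST, ← sq, ← pow_mul]
      congr 1
      rw [pow_succ]
      ring
    have e2 : ‖S‖ ^ (2^m) = ‖S ^ (2^m)‖ := (cotlar_sa_pow_norm S hSsa m).symm
    have e3 : 2*n+1 = 2^(m+1) - 1 := by
      have : 2^(m+1) = 2 * 2^m := by rw [pow_succ]; ring
      omega
    rw [e1, e2, hn]
    calc ‖S ^ (n+1)‖ ≤ (r : ℝ) * M * K ^ (2*n+1) := powS n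
      _ = (r : ℝ) * M * K ^ (2^(m+1) - 1) := by rw [e3]
  -- conclusion by taking roots
  show ‖T‖ ≤ K
  by_contra hcon
  push_neg at hcon
  have hT0 : 0 ≤ ‖T‖ := norm_nonneg _
  have hrM0 : 0 ≤ (r : ℝ) * M := by positivity
  rcases eq_or_lt_of_le hK0 with hKz | hKpos
  · -- K = 0
    have h0 : ‖T‖ ^ (2^(0+1)) ≤ (r : ℝ) * M * K ^ (2^(0+1) - 1) := master 0
    rw [← hKz] at h0
    norm_num at h0
    have : ‖T‖ = 0 := by simp [h0]
    rw [this] at hcon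
    exact absurd hcon (not_lt.mpr hK0)
  · -- K > 0
    have hdiv : 1 < ‖T‖ / K := (one_lt_div hKpos).mpr hcon
    obtain ⟨n, hn⟩ := pow_unbounded_of_one_lt ((r : ℝ) * M / K) hdiv
    have hle : (‖T‖ / K) ^ n ≤ (‖T‖ / K) ^ (2^(n+1)) :=
      pow_le_pow_right₀ hdiv.le
        (le_trans (Nat.lt_two_pow_self (n := n)).le (Nat.pow_le_pow_right (by norm_num) (Nat.le_succ n)))
    have hup : (‖T‖ / K) ^ (2^(n+1)) ≤ (r : ℝ) * M / K := by
      have hm := master n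
      have he : 2^(n+1) - 1 + 1 = 2^(n+1) := Nat.sub_add_cancel Nat.one_le_two_pow
      rw [div_pow]
      rw [div_le_div_iff₀ (by positivity) hKpos]
      calc ‖T‖ ^ (2^(n+1)) * K ≤ ((r : ℝ) * M * K ^ (2^(n+1) - 1)) * K :=
            mul_le_mul_of_nonneg_right hm hKpos.le
        _ = (r : ℝ) * M * K ^ (2^(n+1)) := by
            rw [mul_assoc, ← pow_succ, he]
    linarith
end

section
/- Let λ : Ω → [−1,1] be continuous on an open set Ω ⊂ ℝ², let a, b, c, d : Ω → ℝ be continuous with sup_Ω max(|b|, |c|) ≤ 2η, sup_Ω |d| ≤ 1 − 3η, and inf_Ω |a| ≥ 1 + 3η for some small η > 0. Define t(ρ, λ) = (λ d(ρ) + c(ρ))/(a(ρ) + λ b(ρ)). Then for all ρ ∈ Ω and λ ∈ [−1,1], |t(ρ,λ)| ≤ (1−η)/(1+η) < 1, and for η sufficiently small there exists κ_η < 1 such that |∂_λ t(ρ, λ)| ≤ κ_η for all (ρ, λ) ∈ Ω × [−1,1]. Consequently, the graph-transform map λ ↦ (ρ' ↦ χ(ρ') t(F^{−1}(ρ'), λ(F^{−1}(ρ'))))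 is a contraction on the space X = {λ ∈ C(Ω̄, ℝ) : ‖λ‖_∞ ≤ 1} with the sup norm, for any cutoff χ ∈ C_c^∞ with 0 ≤ χ ≤ 1 and any homeomorphism F⁻¹ defined on supp χ with image in Ω. -/
/-! The graph transform is contracting because of the identity
`t(l) - t(m) = (l - m) (d - b t(m)) / (a + l b)`, obtained by cross-multiplying
`t(l) (a + l b) = l d + c`. For `|l|, |m| ≤ 1` the denominator has modulus at least
`|a| - 2η ≥ 1 + η`, while `|t(m)| ≤ 1` gives `|d - b t(m)| ≤ (1 - 3η) + 2η = 1 - η`;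
so `t` is `(1 - η)/(1 + η)`-Lipschitz in `l`, and the case `m = l` is the bound on `∂_λ t`. -/

/-- The slope of the image of the line of slope `l` under the matrix `!![a, b; c, d]`. -/
noncomputable def lineSlopeImage (a b c d l : ℝ) : ℝ := (l * d + c) / (a + l * b)

structure NearlyHyperbolic (η a b c d : ℝ) : Prop where
  abs_b_le : |b| ≤ 2 * η
  abs_c_le : |c| ≤ 2 * η
  abs_d_le : |d| ≤ 1 - 3 * η
  le_abs_a : 1 + 3 * η ≤ |a|

theorem lineSlopeImage_sub {a b c d l m : ℝ} (hl : a + l * b ≠ 0) (hm : a + m * b ≠ 0) :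
    lineSlopeImage a b c d l - lineSlopeImage a b c d m =
      (l - m) * (d - b * lineSlopeImage a b c d m) / (a + l * b) := by
  rw [lineSlopeImage, lineSlopeImage, div_sub_div _ _ hl hm, eq_div_iff hl]
  field_simp
  ring

theorem div_sub_mul_div_sq_eq {a b c d l : ℝ} (hl : a + l * b ≠ 0) :
    d / (a + l * b) - b * (l * d + c) / (a + l * b) ^ 2 =
      (d - b * lineSlopeImage a b c d l) / (a + l * b) := by
  unfold lineSlopeImage
  field_simp

namespace NearlyHyperbolic

variable {η a b c d l m : ℝ} (h : NearlyHyperbolic η a b c d)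
include h

theorem nonneg : 0 ≤ η := by
  linarith [abs_nonneg b, h.abs_b_le]

theorem one_add_le_abs_denom (hl : |l| ≤ 1) : 1 + η ≤ |a + l * b| := by
  have hlb : |l * b| ≤ 2 * η := by
    rw [abs_mul]
    simpa using mul_le_mul hl h.abs_b_le (abs_nonneg b) zero_le_one
  linarith [abs_sub_abs_le_abs_add a (l * b), h.le_abs_a]

theorem denom_ne_zero (hl : |l| ≤ 1) : a + l * b ≠ 0 :=
  abs_pos.mp (by linarith [h.one_add_le_abs_denom hl, h.nonneg])

theorem abs_lineSlopeImage_le (hl : |l| ≤ 1) :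
    |lineSlopeImage a b c d l| ≤ (1 - η) / (1 + η) := by
  have hnum : |l * d + c| ≤ 1 - η := by
    have hld : |l * d| ≤ 1 - 3 * η := by
      rw [abs_mul]
      simpa using mul_le_mul hl h.abs_d_le (abs_nonneg d) zero_le_one
    linarith [abs_add_le (l * d) c, h.abs_c_le]
  rw [lineSlopeImage, abs_div]
  exact div_le_div₀ ((abs_nonneg _).trans hnum) hnum (by linarith [h.nonneg])
    (h.one_add_le_abs_denom hl)

theorem abs_sub_mul_lineSlopeImage_le (hm : |m| ≤ 1) :
    |d - b * lineSlopeImage a b c d m| ≤ 1 - η := by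
  have hη := h.nonneg
  have ht : |lineSlopeImage a b c d m| ≤ 1 :=
    (h.abs_lineSlopeImage_le hm).trans ((div_le_one (by linarith)).2 (by linarith))
  have hbt : |b * lineSlopeImage a b c d m| ≤ 2 * η := by
    rw [abs_mul]
    simpa using mul_le_mul h.abs_b_le ht (abs_nonneg _) (by linarith)
  linarith [abs_sub d (b * lineSlopeImage a b c d m), h.abs_d_le]

theorem abs_sub_mul_lineSlopeImage_div_le (hl : |l| ≤ 1) (hm : |m| ≤ 1) :
    |(d - b * lineSlopeImage a b c d m) / (a + l * b)| ≤ (1 - η) / (1 + η) := by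
  rw [abs_div]
  have hnum := h.abs_sub_mul_lineSlopeImage_le hm
  exact div_le_div₀ ((abs_nonneg _).trans hnum) hnum (by linarith [h.nonneg])
    (h.one_add_le_abs_denom hl)

theorem abs_lineSlopeImage_sub_le (hl : |l| ≤ 1) (hm : |m| ≤ 1) :
    |lineSlopeImage a b c d l - lineSlopeImage a b c d m| ≤ (1 - η) / (1 + η) * |l - m| := by
  rw [lineSlopeImage_sub (h.denom_ne_zero hl) (h.denom_ne_zero hm), mul_div_assoc, abs_mul,
    mul_comm]
  exact mul_le_mul_of_nonneg_right (h.abs_sub_mul_lineSlopeImage_div_le hl hm) (abs_nonneg _)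

theorem abs_deriv_lineSlopeImage_le (hl : |l| ≤ 1) :
    |d / (a + l * b) - b * (l * d + c) / (a + l * b) ^ 2| ≤ (1 - η) / (1 + η) := by
  rw [div_sub_mul_div_sq_eq (h.denom_ne_zero hl)]
  exact h.abs_sub_mul_lineSlopeImage_div_le hl hl

end NearlyHyperbolic

/-- The slope-transformation estimates. For `η > 0` small enough, whenever
`a, b, c, d : Ω → ℝ` satisfy `|b|, |c| ≤ 2η`, `|d| ≤ 1 − 3η`, `|a| ≥ 1 + 3η` on `Ω`, the
map `t(ρ, λ) = (λ d(ρ) + c(ρ))/(a(ρ) + λ b(ρ))` satisfies `|t(ρ,λ)| ≤ (1−η)/(1+η) < 1`,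
its `λ`-derivative is bounded by some `κ < 1`, and consequently the graph transform
`λ ↦ (ρ' ↦ χ(ρ') t(F⁻¹(ρ'), λ(F⁻¹(ρ'))))` is a `κ`-contraction on the unit ball of
bounded functions (in the sup norm). -/
theorem stmt14 :
    ∃ η₀ > (0:ℝ), ∀ η : ℝ, 0 < η → η ≤ η₀ →
      ∃ κ : ℝ, 0 ≤ κ ∧ κ < 1 ∧
        ∀ (Ω : Set (ℝ × ℝ)) (a b c d : ℝ × ℝ → ℝ),
          (∀ ρ ∈ Ω, |b ρ| ≤ 2 * η) → (∀ ρ ∈ Ω, |c ρ| ≤ 2 * η) →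
          (∀ ρ ∈ Ω, |d ρ| ≤ 1 - 3 * η) → (∀ ρ ∈ Ω, 1 + 3 * η ≤ |a ρ|) →
          (∀ ρ ∈ Ω, ∀ l ∈ Set.Icc (-1:ℝ) 1,
            |(l * d ρ + c ρ) / (a ρ + l * b ρ)| ≤ (1 - η) / (1 + η) ∧
              (1 - η) / (1 + η) < 1) ∧
          (∀ ρ ∈ Ω, ∀ l ∈ Set.Icc (-1:ℝ) 1,
            |d ρ / (a ρ + l * b ρ) - b ρ * (l * d ρ + c ρ) / (a ρ + l * b ρ) ^ 2| ≤ κ) ∧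
          (∀ (χ : ℝ × ℝ → ℝ) (Finv : ℝ × ℝ → ℝ × ℝ),
            (∀ ρ', 0 ≤ χ ρ') → (∀ ρ', χ ρ' ≤ 1) →
            (∀ ρ' ∈ Function.support χ, Finv ρ' ∈ Ω) →
            ∀ lam mu : ℝ × ℝ → ℝ,
              (∀ ρ, |lam ρ| ≤ 1) → (∀ ρ, |mu ρ| ≤ 1) →
              ∀ δ : ℝ, 0 ≤ δ → (∀ ρ ∈ Ω, |lam ρ - mu ρ| ≤ δ) →
              ∀ ρ' : ℝ × ℝ,
                |χ ρ' * ((lam (Finv ρ') * d (Finv ρ') + c (Finv ρ')) /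
                    (a (Finv ρ') + lam (Finv ρ') * b (Finv ρ'))) -
                  χ ρ' * ((mu (Finv ρ') * d (Finv ρ') + c (Finv ρ')) /
                    (a (Finv ρ') + mu (Finv ρ') * b (Finv ρ')))| ≤ κ * δ) := by
  refine ⟨1, one_pos, fun η hη hη₁ => ?_⟩
  have hκ₀ : 0 ≤ (1 - η) / (1 + η) := div_nonneg (by linarith) (by linarith)
  have hκ₁ : (1 - η) / (1 + η) < 1 := (div_lt_one (by linarith)).2 (by linarith)
  refine ⟨(1 - η) / (1 + η), hκ₀, hκ₁, ?_⟩
  intro Ω a b c d hb hc hd ha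
  have hyp (ρ) (hρ : ρ ∈ Ω) : NearlyHyperbolic η (a ρ) (b ρ) (c ρ) (d ρ) :=
    ⟨hb ρ hρ, hc ρ hρ, hd ρ hρ, ha ρ hρ⟩
  refine ⟨fun ρ hρ l hl => ⟨(hyp ρ hρ).abs_lineSlopeImage_le (abs_le.2 hl), hκ₁⟩,
    fun ρ hρ l hl => (hyp ρ hρ).abs_deriv_lineSlopeImage_le (abs_le.2 hl), ?_⟩
  intro χ Finv hχ₀ hχ₁ hsupp lam mu hlam hmu δ hδ hlm ρ'
  rcases eq_or_ne (χ ρ') 0 with hχ | hχ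
  · simpa [hχ] using mul_nonneg hκ₀ hδ
  have hρ : Finv ρ' ∈ Ω := hsupp ρ' hχ
  rw [← mul_sub, abs_mul, abs_of_nonneg (hχ₀ ρ')]
  calc χ ρ' * |lineSlopeImage _ _ _ _ (lam (Finv ρ')) -
        lineSlopeImage _ _ _ _ (mu (Finv ρ'))|
      ≤ 1 * ((1 - η) / (1 + η) * |lam (Finv ρ') - mu (Finv ρ')|) :=
        mul_le_mul (hχ₁ ρ') ((hyp _ hρ).abs_lineSlopeImage_sub_le (hlam _) (hmu _))
          (abs_nonneg _) zero_le_one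
    _ ≤ (1 - η) / (1 + η) * δ := by
        rw [one_mul]
        exact mul_le_mul_of_nonneg_left (hlm _ hρ) hκ₀
end
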